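/- arXiv:2509.06643 — 5 statements merged into one kernel-verified Lean document; each statement's English description precedes it below -/
import Mathlib

section
/- A nonzero real univariate polynomial whose support (set of monomials with nonzero coefficient) has cardinality N has at most N − 1 distinct positive real roots. -/
open Polynomial

private lemma pos_root_set_eq (q : Polynomial ℝ) (hq : q ≠ 0) :
    {x : ℝ | 0 < x ∧ q.eval x = 0} =
      ↑(q.roots.toFinset.filter (fun x => 0 < x)) := by
  ext x
  simp only [Set.mem_setOf_eq, Finset.coe_filter, Multiset.mem_toFinset,
    mem_roots hq, IsRoot, Set.mem_setOf_eq]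
  tauto

private lemma rolle_pos_roots (q : Polynomial ℝ) (hq : q ≠ 0) (hq' : derivative q ≠ 0) :
    {x : ℝ | 0 < x ∧ q.eval x = 0}.ncard ≤
      {x : ℝ | 0 < x ∧ (derivative q).eval x = 0}.ncard + 1 := by
  rw [pos_root_set_eq q hq, pos_root_set_eq _ hq', Set.ncard_coe_finset,
    Set.ncard_coe_finset]
  set s := q.roots.toFinset.filter (fun x => 0 < x) with hs
  set t := (derivative q).roots.toFinset.filter (fun x => 0 < x) with ht
  have key : s.card ≤ (t \ s).card + 1 := by
    refine Finset.card_le_diff_of_interleaved fun x hx y hy hxy hxy' => ?_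
    rw [hs, Finset.mem_filter, Multiset.mem_toFinset, mem_roots hq] at hx hy
    obtain ⟨z, hz1, hz2⟩ := exists_deriv_eq_zero hxy q.continuousOn (hx.1.trans hy.1.symm)
    refine ⟨z, ?_, hz1⟩
    rw [ht, Finset.mem_filter, Multiset.mem_toFinset, mem_roots hq', IsRoot, ← q.deriv]
    exact ⟨hz2, lt_trans hx.2 hz1.1⟩
  calc s.card ≤ (t \ s).card + 1 := key
    _ ≤ t.card + 1 := by
        exact Nat.add_le_add_right (Finset.card_mono Finset.sdiff_subset) 1

private lemma support_deriv_card (q : Polynomial ℝ) (h0 : q.coeff 0 ≠ 0) :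
    (derivative q).support.card + 1 ≤ q.support.card := by
  have hsub : (derivative q).support ⊆ (q.support.erase 0).image (· - 1) := by
    intro n hn
    rw [mem_support_iff, coeff_derivative] at hn
    have hc : q.coeff (n + 1) ≠ 0 := fun h => hn (by simp [h])
    refine Finset.mem_image.2 ⟨n + 1, ?_, by simp⟩
    exact Finset.mem_erase.2 ⟨Nat.succ_ne_zero n, mem_support_iff.2 hc⟩
  have h1 : (derivative q).support.card ≤ (q.support.erase 0).card :=
    le_trans (Finset.card_le_card hsub) Finset.card_image_le
  have h2 : (q.support.erase 0).card + 1 = q.support.card :=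
    Finset.card_erase_add_one (mem_support_iff.2 h0)
  omega

private lemma support_X_pow_mul_card (m : ℕ) (q : Polynomial ℝ) :
    (X ^ m * q).support.card = q.support.card := by
  have him : (X ^ m * q).support = q.support.image (· + m) := by
    ext k
    simp only [mem_support_iff, coeff_X_pow_mul', Finset.mem_image]
    constructor
    · intro hk
      by_cases h : m ≤ k
      · rw [if_pos h] at hk
        exact ⟨k - m, hk, by omega⟩
      · rw [if_neg h] at hk; exact absurd rfl hk
    · rintro ⟨n, hn, rfl⟩
      rw [if_pos (Nat.le_add_left m n)]
      simpa using hn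
  rw [him, Finset.card_image_of_injective _ (add_left_injective m)]

/-- Weak Descartes rule: a nonzero real polynomial supported on `N` monomials has at
most `N − 1` distinct positive real roots. -/
theorem stmt11 (p : Polynomial ℝ) (hp : p ≠ 0) (N : ℕ) (hN : p.support.card = N) :
    {x : ℝ | 0 < x ∧ p.eval x = 0}.ncard ≤ N - 1 := by
  induction N using Nat.strong_induction_on generalizing p with
  | _ N ih =>
  -- factor out the trailing power of X
  obtain ⟨m, hm⟩ : ∃ m, m = p.natTrailingDegree := ⟨_, rfl⟩
  have hdvd : X ^ m ∣ p :=
    X_pow_dvd_iff.2 fun d hd => coeff_eq_zero_of_lt_natTrailingDegree (hm ▸ hd)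
  obtain ⟨q, hpq⟩ := hdvd
  have hq : q ≠ 0 := by
    intro h; exact hp (by rw [hpq, h, mul_zero])
  have hq0 : q.coeff 0 ≠ 0 := by
    have htc : p.coeff m ≠ 0 := by
      rw [hm]; exact trailingCoeff_nonzero_iff_nonzero.2 hp
    rw [hpq] at htc
    have h00 : (X ^ m * q).coeff (0 + m) = q.coeff 0 := coeff_X_pow_mul q m 0
    rw [zero_add] at h00
    rwa [h00] at htc
  have hroots : {x : ℝ | 0 < x ∧ p.eval x = 0} = {x : ℝ | 0 < x ∧ q.eval x = 0} := by
    ext x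
    simp only [Set.mem_setOf_eq, hpq, eval_mul, eval_pow, eval_X]
    constructor
    · rintro ⟨hx, h⟩
      exact ⟨hx, by
        rcases mul_eq_zero.1 h with h' | h'
        · exact absurd h' (pow_ne_zero _ (ne_of_gt hx))
        · exact h'⟩
    · rintro ⟨hx, h⟩
      exact ⟨hx, by rw [h, mul_zero]⟩
  have hNq : q.support.card = N := by
    rw [← hN, hpq, support_X_pow_mul_card]
  rw [hroots]
  by_cases hq' : derivative q = 0
  · -- q is a nonzero constant, so no positive roots
    have hqc : q = C (q.coeff 0) := eq_C_of_derivative_eq_zero hq'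
    have : {x : ℝ | 0 < x ∧ q.eval x = 0} = ∅ := by
      ext x
      simp only [Set.mem_setOf_eq, Set.mem_empty_iff_false, iff_false, not_and]
      intro _
      rw [hqc]; simpa using hq0
    rw [this]
    simp
  · set N' := (derivative q).support.card with hN'
    have h1 : N' + 1 ≤ N := by
      rw [← hNq]; exact support_deriv_card q hq0
    have hN'pos : 0 < N' := by
      rcases Nat.eq_zero_or_pos N' with h | h
      · rw [hN'] at h
        exact absurd (support_eq_empty.1 (Finset.card_eq_zero.1 h)) hq'
      · exact h
    have hih := ih N' (by omega) (derivative q) hq' rfl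
    have hrolle := rolle_pos_roots q hq hq'
    omega
end

section
/- For every finite nonnegative Borel measure μ on ℝ^n with finite moments up to degree s, there exists a quadrature rule of strength s with at most binom(n+s, s) nodes: finitely many points x_1,…,x_N ∈ supp(μ), N ≤ binom(n+s,s), and weights ω_i > 0 such that ∫ p dμ = ∑ ω_i p(x_i) for all polynomials p of total degree at most s. -/
/-!
Let `T x` be the vector of all monomials of degree at most `s` evaluated at `x`. The mean `c` of
`T` over `μ` lies in the closure of the convex hull of `T '' supp μ`, and in fact in the hull
itself: otherwise some linear functional `ψ` supports the hull at `c` without being constant on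
it, and then `ψ ∘ T - ψ c` is a polynomial of degree at most `s` which is nonnegative on the
support with integral zero, hence vanishes on the support. Carathéodory's theorem writes `c` as a
convex combination of affinely independent points `T xᵢ`; since their constant coordinate is
`1` they are even linearly independent, so there are at most `binom(n+s, s)` of them.
-/

open MeasureTheory Set MvPolynomial

/-- The support of a Borel measure: points all of whose open neighbourhoods have
positive measure. -/
def measureSupport {α : Type*} [TopologicalSpace α] [MeasurableSpace α]
    (μ : Measure α) : Set α :=
  {x | ∀ U : Set α, IsOpen U → x ∈ U → 0 < μ U}

section Separation

variable {E : Type*} [NormedAddCommGroup E] [NormedSpace ℝ E] {K : Set E} {c : E}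

theorem Convex.exists_forall_le_lt_of_notMem (hK : Convex ℝ K) (hint : (interior K).Nonempty)
    (hc : c ∉ K) : ∃ f : StrongDual ℝ E, (∀ a ∈ K, f c ≤ f a) ∧ ∃ a ∈ K, f c < f a := by
  obtain ⟨f, hf⟩ := geometric_hahn_banach_point_open hK.interior isOpen_interior
    (fun h => hc (interior_subset h))
  have hKf : K ⊆ {a | f c ≤ f a} := calc
    K ⊆ closure (interior K) := by
      rw [hK.closure_interior_eq_closure_of_nonempty_interior hint]; exact subset_closure
    _ ⊆ {a | f c ≤ f a} :=
      closure_minimal (fun a ha => (hf a ha).le) (isClosed_le continuous_const f.continuous)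
  obtain ⟨a, ha⟩ := hint
  exact ⟨f, hKf, a, interior_subset ha, hf a ha⟩

theorem affineSpan_eq_top_of_zero_mem {s : Set E} (h0 : (0 : E) ∈ affineSpan ℝ s)
    (hs : Submodule.span ℝ s = ⊤) : affineSpan ℝ s = ⊤ := by
  rw [← affineSpan_insert_eq_affineSpan ℝ h0,
    AffineSubspace.affineSpan_eq_top_iff_vectorSpan_eq_top_of_nonempty ℝ E E (insert_nonempty _ _),
    vectorSpan_eq_span_vsub_set_right ℝ (mem_insert _ _)]
  simpa using hs

variable [FiniteDimensional ℝ E]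

theorem Convex.exists_nonneg_pos_of_zero_mem_closure (hK : Convex ℝ K)
    (h0 : (0 : E) ∈ closure K) (h0K : (0 : E) ∉ K) :
    ∃ ψ : StrongDual ℝ E, (∀ a ∈ K, 0 ≤ ψ a) ∧ ∃ a ∈ K, 0 < ψ a := by
  set W := Submodule.span ℝ K
  set K' : Set W := (↑) ⁻¹' K
  have hK' : Convex ℝ K' := hK.linear_preimage W.subtype
  have h0' : (0 : W) ∈ closure K' := by
    rwa [closure_subtype,
      image_preimage_eq_of_subset (by rw [Subtype.range_coe]; exact Submodule.subset_span)]
  have hint : (interior K').Nonempty := by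
    rw [hK'.interior_nonempty_iff_affineSpan_eq_top]
    exact affineSpan_eq_top_of_zero_mem
      (closure_minimal (subset_affineSpan ℝ K') (AffineSubspace.closed_of_finiteDimensional _) h0')
      Submodule.span_span_coe_preimage
  obtain ⟨f, hf, a, ha, hfa⟩ := hK'.exists_forall_le_lt_of_notMem hint (c := 0) h0K
  obtain ⟨ψ, hψ, -⟩ := exists_extension_norm_eq W f
  refine ⟨ψ, fun b hb => ?_, a, ha, ?_⟩
  · simpa [hψ ⟨b, Submodule.subset_span hb⟩] using hf ⟨b, Submodule.subset_span hb⟩ hb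
  · simpa [hψ a] using hfa

theorem Convex.exists_forall_le_lt_of_mem_closure (hK : Convex ℝ K) (hc : c ∈ closure K)
    (hcK : c ∉ K) : ∃ ψ : StrongDual ℝ E, (∀ a ∈ K, ψ c ≤ ψ a) ∧ ∃ a ∈ K, ψ c < ψ a := by
  have h0 : (0 : E) ∈ closure ((c + ·) ⁻¹' K) := by
    have h := (Homeomorph.addLeft c).preimage_closure K
    rw [Homeomorph.coe_addLeft] at h
    simpa [← h] using hc
  obtain ⟨ψ, hψ, a, ha, hψa⟩ :=
    (hK.translate_preimage_right c).exists_nonneg_pos_of_zero_mem_closure h0 (by simpa using hcK)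
  refine ⟨ψ, fun b hb => ?_, c + a, ha, by simpa using hψa⟩
  simpa using hψ (b - c) (by simpa using hb)

theorem mem_convexHull_of_mem_closure {A : Set E} (hc : c ∈ closure (convexHull ℝ A))
    (H : ∀ ψ : StrongDual ℝ E, (∀ a ∈ A, ψ c ≤ ψ a) → ∀ a ∈ A, ψ a = ψ c) :
    c ∈ convexHull ℝ A := by
  by_contra hcA
  obtain ⟨ψ, hψ, a, ha, hψa⟩ := (convex_convexHull ℝ A).exists_forall_le_lt_of_mem_closure hc hcA
  have hhull : convexHull ℝ A ⊆ {b | ψ b = ψ c} :=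
    convexHull_min (H ψ fun b hb => hψ b (subset_convexHull ℝ A hb))
      (convex_hyperplane ψ.isLinear _)
  exact hψa.ne' (hhull ha)

end Separation

theorem AffineIndependent.linearIndependent_of_forall_eq_one {ι k V : Type*} [Ring k]
    [AddCommGroup V] [Module k V] {z : ι → V} (hz : AffineIndependent k z) (φ : V →ₗ[k] k)
    (hφ : ∀ i, φ (z i) = 1) : LinearIndependent k z := by
  rw [linearIndependent_iff']
  intro s g hg
  refine affineIndependent_iff.1 hz s g ?_ hg
  simpa [hφ] using congrArg φ hg

theorem measureSupport_eq_support {X : Type*} [TopologicalSpace X] [MeasurableSpace X]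
    (μ : Measure X) : measureSupport μ = μ.support := by
  ext x
  simp only [measureSupport, Measure.support_eq_forall_isOpen, mem_ofPred_eq]
  exact forall_congr' fun _ => Imp.swap

section Support

variable {X : Type*} [TopologicalSpace X] [HereditarilyLindelofSpace X] [MeasurableSpace X]
  {μ : Measure X}

theorem Continuous.eqOn_zero_support_of_integral_eq_zero {g : X → ℝ} (hg : Continuous g)
    (hgi : Integrable g μ) (hg0 : ∀ x ∈ μ.support, 0 ≤ g x) (h : ∫ x, g x ∂μ = 0) :
    EqOn g 0 μ.support := by
  have hg0ae : 0 ≤ᵐ[μ] g := Filter.mem_of_superset μ.support_mem_ae hg0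
  have hnull : μ {x | g x ≠ 0} = 0 :=
    ae_iff.1 ((integral_eq_zero_iff_of_nonneg_ae hg0ae hgi).1 h)
  intro x hx
  by_contra hgx
  exact ((Measure.mem_support_iff_forall x).1 hx _
    ((isOpen_ne_fun hg continuous_const).mem_nhds hgx)).ne' hnull

variable {E : Type*} [NormedAddCommGroup E] [NormedSpace ℝ E] [FiniteDimensional ℝ E]
  [IsFiniteMeasure μ] {T : X → E}

theorem average_mem_convexHull_image_support [NeZero μ] (hT : Continuous T)
    (hTi : Integrable T μ) : ⨍ x, T x ∂μ ∈ convexHull ℝ (T '' μ.support) := by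
  set c := ⨍ x, T x ∂μ
  refine mem_convexHull_of_mem_closure ((convex_convexHull ℝ _).closure.average_mem
    isClosed_closure (Filter.mem_of_superset μ.support_mem_ae fun x hx =>
      subset_closure (subset_convexHull ℝ _ (mem_image_of_mem T hx))) hTi) ?_
  rintro ψ hψ _ ⟨x, hx, rfl⟩
  have hmean : ∫ y, (ψ (T y) - ψ c) ∂μ = 0 := by
    rw [integral_sub (ψ.integrable_comp hTi) (integrable_const _), ψ.integral_comp_comm hTi,
      ← measure_smul_average, integral_const, map_smul, sub_self]
  exact sub_eq_zero.1 <|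
    ((ψ.continuous.comp hT).sub continuous_const).eqOn_zero_support_of_integral_eq_zero
      ((ψ.integrable_comp hTi).sub (integrable_const _))
      (fun y hy => sub_nonneg.2 (hψ _ (mem_image_of_mem T hy))) hmean hx

theorem exists_integral_eq_sum_smul_of_forall_eq_one (hT : Continuous T) (hTi : Integrable T μ)
    (φ : E →ₗ[ℝ] ℝ) (hφ : ∀ x, φ (T x) = 1) :
    ∃ (N : ℕ) (x : Fin N → X) (ω : Fin N → ℝ), N ≤ Module.finrank ℝ E ∧
      (∀ i, x i ∈ μ.support) ∧ (∀ i, 0 < ω i) ∧ ∫ y, T y ∂μ = ∑ i, ω i • T (x i) := by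
  rcases eq_zero_or_neZero μ with rfl | _
  · exact ⟨0, Fin.elim0, Fin.elim0, by simp⟩
  obtain ⟨ι, _, z, w, hzA, hz, hw0, -, hwz⟩ :=
    eq_pos_convex_span_of_mem_convexHull (average_mem_convexHull_image_support hT hTi)
  choose x hx hxz using fun i => hzA (mem_range_self i)
  let e := (Fintype.equivFin ι).symm
  refine ⟨Fintype.card ι, x ∘ e, fun i => μ.real univ * w (e i), ?_, fun i => hx (e i),
    fun i => mul_pos measureReal_univ_pos (hw0 (e i)), ?_⟩
  · exact LinearIndependent.fintype_card_le_finrank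
      (hz.linearIndependent_of_forall_eq_one φ fun i => hxz i ▸ hφ (x i))
  · calc ∫ y, T y ∂μ = μ.real univ • ∑ i, w i • z i := by rw [hwz, measure_smul_average]
      _ = ∑ i, (μ.real univ * w (e i)) • T (x (e i)) := by
        rw [Finset.smul_sum, ← e.sum_comp]
        simp only [smul_smul, hxz]

end Support

noncomputable def exponentsDegreeLE (σ : Type*) [Finite σ] (s : ℕ) : Finset (σ →₀ ℕ) :=
  (Finsupp.finite_of_degree_le s).toFinset

section Exponents
variable {σ : Type*} [Finite σ] {s : ℕ}

theorem mem_exponentsDegreeLE {m : σ →₀ ℕ} : m ∈ exponentsDegreeLE σ s ↔ m.degree ≤ s :=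
  Set.Finite.mem_toFinset _

theorem totalDegree_monomial_le_of_mem_exponentsDegreeLE {R : Type*} [CommSemiring R]
    {m : σ →₀ ℕ} (hm : m ∈ exponentsDegreeLE σ s) (c : R) : (monomial m c).totalDegree ≤ s :=
  (totalDegree_monomial_le m c).trans (mem_exponentsDegreeLE.1 hm)

end Exponents

theorem card_exponentsDegreeLE_le (n s : ℕ) :
    (exponentsDegreeLE (Fin n) s).card ≤ (n + s).choose s := by
  classical
  calc (exponentsDegreeLE (Fin n) s).card
      ≤ (Finset.univ.finsuppAntidiag s : Finset (Fin (n + 1) →₀ ℕ)).card := by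
        refine Finset.card_le_card_of_injOn (fun m => Finsupp.cons (s - m.degree) m)
          (fun m hm => ?_) fun m _ m' _ h => (Finsupp.cons_injective2 h).2
        have hdeg : (Finsupp.cons (s - m.degree) m).degree = s - m.degree + m.degree := by
          simp [Finsupp.degree_eq_sum, Fin.sum_univ_succ]
        simp [Finset.mem_finsuppAntidiag, ← Finsupp.degree_eq_sum, hdeg,
          Nat.sub_add_cancel (mem_exponentsDegreeLE.1 hm)]
    _ = (n + s).choose s := by simp [Finset.card_finsuppAntidiag_nat_eq_choose]

noncomputable def monomialVector {σ : Type*} [Finite σ] (s : ℕ) (x : σ → ℝ) :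
    exponentsDegreeLE σ s → ℝ :=
  fun m => eval x (monomial m.1 1)

section MonomialVector
variable {σ : Type*} [Finite σ] {s : ℕ}

theorem continuous_monomialVector : Continuous (monomialVector (σ := σ) s) :=
  continuous_pi fun _ => continuous_eval _

theorem monomialVector_zero (x : σ → ℝ) :
    monomialVector s x ⟨0, mem_exponentsDegreeLE.2 (by simp)⟩ = 1 := by
  simp [monomialVector]

theorem eval_eq_sum_coeff_mul_monomialVector {p : MvPolynomial σ ℝ} (hp : p.totalDegree ≤ s)
    (x : σ → ℝ) : eval x p = ∑ m : exponentsDegreeLE σ s, p.coeff m * monomialVector s x m := by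
  unfold monomialVector
  rw [Finset.sum_coe_sort (exponentsDegreeLE σ s) fun m => p.coeff m * eval x (monomial m 1),
    eval_eq, ← Finset.sum_subset fun m hm =>
      mem_exponentsDegreeLE.2 ((le_totalDegree hm).trans hp)]
  · simp [eval_monomial, Finsupp.prod]
  · intro m _ hm
    simp [notMem_support_iff.1 hm]

end MonomialVector

/-- Richter–Tchakaloff with the Carathéodory bound: every finite measure on `ℝⁿ` with
finite moments up to degree `s` admits a quadrature rule of strength `s`, with nodes
in the support and at most `binom(n+s,s)` of them. -/
theorem stmt13 (n s : ℕ) (μ : Measure (Fin n → ℝ)) [IsFiniteMeasure μ]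
    (hmom : ∀ p : MvPolynomial (Fin n) ℝ, p.totalDegree ≤ s →
      Integrable (fun x => MvPolynomial.eval x p) μ) :
    ∃ (N : ℕ) (x : Fin N → (Fin n → ℝ)) (ω : Fin N → ℝ),
      N ≤ Nat.choose (n + s) s ∧
      (∀ i, x i ∈ measureSupport μ) ∧
      (∀ i, 0 < ω i) ∧
      ∀ p : MvPolynomial (Fin n) ℝ, p.totalDegree ≤ s →
        ∫ y, MvPolynomial.eval y p ∂μ = ∑ i, ω i * MvPolynomial.eval (x i) p := by
  have hTi : Integrable (monomialVector s) μ := integrable_pi_iff.2 fun m =>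
    hmom _ (totalDegree_monomial_le_of_mem_exponentsDegreeLE m.2 1)
  obtain ⟨N, x, ω, hN, hx, hω, hint⟩ := exists_integral_eq_sum_smul_of_forall_eq_one
    continuous_monomialVector hTi (LinearMap.proj _) monomialVector_zero
  refine ⟨N, x, ω, hN.trans ?_, fun i => measureSupport_eq_support μ ▸ hx i, hω, fun p hp => ?_⟩
  · simpa using card_exponentsDegreeLE_le n s
  let ψ : (exponentsDegreeLE (Fin n) s → ℝ) →L[ℝ] ℝ :=
    ∑ m : exponentsDegreeLE (Fin n) s, p.coeff m • ContinuousLinearMap.proj m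
  have hψ (y : Fin n → ℝ) : eval y p = ψ (monomialVector s y) := by
    rw [eval_eq_sum_coeff_mul_monomialVector hp]
    simp [ψ]
  simp_rw [hψ]
  rw [ψ.integral_comp_comm hTi, hint, map_sum]
  simp only [map_smul, smul_eq_mul]
end

section
/- Let h: (a,b) → ℝ be a strictly convex differentiable function attaining its minimum at y ∈ (a,b), and let H be a polynomial whose distinct roots in (a,b) are all simple. Call a root t 'admissible' if t < y and H'(t) ≥ 0, or t ≥ y and H'(t) ≤ 0. If H has r distinct simple roots in (a,b), then the number of admissible roots is at most r/2 + 1 when r is even, and at most ⌈r/2⌉ when r is odd. -/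
/-!
Between two consecutive simple zeros of a continuous function the derivative cannot have the same
sign at both (the function would leave the first zero upwards and reach the second from below, so
it would vanish in between), hence `H'` alternates in sign along the roots `t 0 < ⋯ < t (r-1)`.
An admissible root left of `y` has `H' > 0` and one right of `y` has `H' < 0`, so no two admissible
roots on the same side of `y` are consecutive. A set of indices without two consecutive elements in
a block of length `m` has at most `⌈m/2⌉` elements, and with `k` roots left of `y`,
`⌈k/2⌉ + ⌈(r-k)/2⌉ ≤ r/2 + 1`.
-/

open Set Filter Topology

theorem card_le_of_no_consecutive {s : Finset ℕ} {m n : ℕ} (hs : s ⊆ Finset.Ico m n)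
    (hsep : ∀ i ∈ s, ∀ j ∈ s, i + 1 ≠ j) : s.card ≤ (n - m + 1) / 2 := by
  have hmaps : MapsTo (fun i => (i - m) / 2) s (Finset.range ((n - m + 1) / 2)) := by
    intro i hi
    have := Finset.mem_Ico.1 (hs hi)
    simp only [Finset.coe_range, mem_Iio]
    omega
  have hinj : InjOn (fun i => (i - m) / 2) s := by
    intro i hi j hj hij
    have := Finset.mem_Ico.1 (hs hi)
    have := Finset.mem_Ico.1 (hs hj)
    have := hsep i hi j hj
    have := hsep j hj i hi
    simp only at hij
    omega
  simpa using Finset.card_le_card_of_injOn _ hmaps hinj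

theorem card_add_card_le_of_no_consecutive {n : ℕ} {A B : Finset ℕ}
    (hA : A ⊆ Finset.range n) (hB : B ⊆ Finset.range n) (hAB : ∀ i ∈ A, ∀ j ∈ B, i < j)
    (hAsep : ∀ i ∈ A, ∀ j ∈ A, i + 1 ≠ j) (hBsep : ∀ i ∈ B, ∀ j ∈ B, i + 1 ≠ j) :
    A.card + B.card ≤ n / 2 + 1 := by
  set k := A.sup (· + 1)
  have hkn : k ≤ n := Finset.sup_le fun i hi => Finset.mem_range.1 (hA hi)
  have hAk : A ⊆ Finset.Ico 0 k := fun i hi =>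
    Finset.mem_Ico.2 ⟨i.zero_le, Finset.le_sup (f := (· + 1)) hi⟩
  have hBk : B ⊆ Finset.Ico k n := fun j hj =>
    Finset.mem_Ico.2 ⟨Finset.sup_le fun i hi => hAB i hi j hj, Finset.mem_range.1 (hB hj)⟩
  have := card_le_of_no_consecutive hAk hAsep
  have := card_le_of_no_consecutive hBk hBsep
  omega

theorem exists_zero_mem_Ioo_of_deriv_pos {f : ℝ → ℝ} {u v : ℝ} (huv : u < v)
    (hf : ContinuousOn f (Icc u v)) (hu : f u = 0) (hv : f v = 0)
    (hu' : 0 < deriv f u) (hv' : 0 < deriv f v) : ∃ c ∈ Ioo u v, f c = 0 := by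
  obtain ⟨z₁, hz₁, hfz₁⟩ : ∃ z ∈ Ioo u v, 0 < f z := by
    have hsign : ∀ᶠ z in 𝓝[>] u, SignType.sign (f z) = SignType.sign (z - u) :=
      nhdsWithin_le_nhds (eventually_nhdsWithin_sign_eq_of_deriv_pos hu' hu)
    obtain ⟨z, hsign, hz⟩ := (hsign.and (Ioo_mem_nhdsGT huv)).exists
    exact ⟨z, hz, sign_eq_one_iff.1 (hsign.trans (sign_eq_one_iff.2 (sub_pos.2 hz.1)))⟩
  obtain ⟨z₂, hz₂, hfz₂⟩ : ∃ z ∈ Ioo z₁ v, f z < 0 := by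
    have hsign : ∀ᶠ z in 𝓝[<] v, SignType.sign (f z) = SignType.sign (z - v) :=
      nhdsWithin_le_nhds (eventually_nhdsWithin_sign_eq_of_deriv_pos hv' hv)
    obtain ⟨z, hsign, hz⟩ := (hsign.and (Ioo_mem_nhdsLT hz₁.2)).exists
    exact ⟨z, hz, sign_eq_neg_one_iff.1 (hsign.trans (sign_eq_neg_one_iff.2 (sub_neg.2 hz.2)))⟩
  obtain ⟨c, hc, hfc⟩ := intermediate_value_Ioo' hz₂.1.le
    (hf.mono (Icc_subset_Icc hz₁.1.le hz₂.2.le)) ⟨hfz₂, hfz₁⟩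
  exact ⟨c, ⟨hz₁.1.trans hc.1, hc.2.trans hz₂.2⟩, hfc⟩

theorem deriv_mul_deriv_neg_of_consecutive_zeros {f : ℝ → ℝ} {u v : ℝ} (huv : u < v)
    (hf : ContinuousOn f (Icc u v)) (hu : f u = 0) (hv : f v = 0)
    (hu' : deriv f u ≠ 0) (hv' : deriv f v ≠ 0) (hno : ∀ c ∈ Ioo u v, f c ≠ 0) :
    deriv f u * deriv f v < 0 := by
  rcases hu'.lt_or_gt with hu' | hu' <;> rcases hv'.lt_or_gt with hv' | hv'
  · obtain ⟨c, hc, hfc⟩ := exists_zero_mem_Ioo_of_deriv_pos (f := -f) huv hf.neg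
      (by simp [hu]) (by simp [hv]) (by simpa [deriv.neg]) (by simpa [deriv.neg])
    exact absurd (neg_eq_zero.1 hfc) (hno c hc)
  · exact mul_neg_of_neg_of_pos hu' hv'
  · exact mul_neg_of_pos_of_neg hu' hv'
  · obtain ⟨c, hc, hfc⟩ := exists_zero_mem_Ioo_of_deriv_pos huv hf hu hv hu' hv'
    exact absurd hfc (hno c hc)

theorem deriv_mul_deriv_neg_of_succ {f : ℝ → ℝ} {a b : ℝ} {r : ℕ} {t : Fin r → ℝ}
    (hf : ContinuousOn f (Ioo a b)) (ht : StrictMono t) (htI : ∀ j, t j ∈ Ioo a b)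
    (hzero : ∀ j, f (t j) = 0) (hsimple : ∀ j, deriv f (t j) ≠ 0)
    (hall : ∀ x ∈ Ioo a b, f x = 0 → ∃ j, x = t j) {i j : Fin r} (hij : (i : ℕ) + 1 = j) :
    deriv f (t i) * deriv f (t j) < 0 := by
  have hIcc : Icc (t i) (t j) ⊆ Ioo a b := Icc_subset_Ioo (htI i).1 (htI j).2
  refine deriv_mul_deriv_neg_of_consecutive_zeros (ht (Fin.lt_def.2 (by omega)))
    (hf.mono hIcc) (hzero i) (hzero j) (hsimple i) (hsimple j) fun x hx hfx => ?_
  obtain ⟨k, rfl⟩ := hall x (hIcc (Ioo_subset_Icc_self hx)) hfx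
  have hik := Fin.lt_def.1 (ht.lt_iff_lt.1 hx.1)
  have hkj := Fin.lt_def.1 (ht.lt_iff_lt.1 hx.2)
  omega

theorem card_filter_or_le_of_no_consecutive {r : ℕ} (L R : Fin r → Prop)
    [DecidablePred L] [DecidablePred R]
    (hL : ∀ i, L i → ∀ j, L j → (i : ℕ) + 1 ≠ j) (hR : ∀ i, R i → ∀ j, R j → (i : ℕ) + 1 ≠ j)
    (hLR : ∀ i, L i → ∀ j, R j → i < j) :
    (Finset.univ.filter fun j => L j ∨ R j).card ≤ r / 2 + 1 := by
  set A := (Finset.univ.filter L).map Fin.valEmbedding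
  set B := (Finset.univ.filter R).map Fin.valEmbedding
  have hAB : A.card + B.card ≤ r / 2 + 1 :=
    card_add_card_le_of_no_consecutive (by simp [A, Finset.subset_iff])
      (by simp [B, Finset.subset_iff]) (by simpa [A, B] using hLR) (by simpa [A] using hL)
      (by simpa [B] using hR)
  calc (Finset.univ.filter fun j => L j ∨ R j).card
      ≤ (Finset.univ.filter L).card + (Finset.univ.filter R).card := by
        rw [Finset.filter_or]; exact Finset.card_union_le _ _
    _ ≤ r / 2 + 1 := by simpa [A, B] using hAB

theorem stmt15_general (a b : ℝ) (y : ℝ) (H : Polynomial ℝ)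
    (r : ℕ) (t : Fin r → ℝ) (ht : StrictMono t)
    (htI : ∀ j, t j ∈ Ioo a b)
    (hroot : ∀ j, H.eval (t j) = 0)
    (hsimple : ∀ j, H.derivative.eval (t j) ≠ 0)
    (hall : ∀ x ∈ Ioo a b, H.eval x = 0 → ∃ j, x = t j) :
    (Even r →
      (Finset.univ.filter fun j =>
          (t j < y ∧ 0 ≤ H.derivative.eval (t j)) ∨
          (y ≤ t j ∧ H.derivative.eval (t j) ≤ 0)).card ≤ r / 2 + 1) ∧
    (Odd r →
      (Finset.univ.filter fun j =>
          (t j < y ∧ 0 ≤ H.derivative.eval (t j)) ∨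
          (y ≤ t j ∧ H.derivative.eval (t j) ≤ 0)).card ≤ (r + 1) / 2) := by
  have halt : ∀ i j : Fin r, (i : ℕ) + 1 = j →
      H.derivative.eval (t i) * H.derivative.eval (t j) < 0 := fun i j hij => by
    simpa only [Polynomial.deriv] using deriv_mul_deriv_neg_of_succ (f := fun x => H.eval x)
      H.continuousOn ht htI hroot (by simpa only [Polynomial.deriv] using hsimple) hall hij
  have hcount := card_filter_or_le_of_no_consecutive
    (fun j => t j < y ∧ 0 < H.derivative.eval (t j))
    (fun j => y ≤ t j ∧ H.derivative.eval (t j) < 0)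
    (fun i hi j hj hij => (halt i j hij).not_ge (mul_pos hi.2 hj.2).le)
    (fun i hi j hj hij => (halt i j hij).not_ge (mul_pos_of_neg_of_neg hi.2 hj.2).le)
    (fun i hi j hj => ht.lt_iff_lt.1 (hi.1.trans_le hj.1))
  have hpos : ∀ j, 0 ≤ H.derivative.eval (t j) ↔ 0 < H.derivative.eval (t j) :=
    fun j => (hsimple j).symm.le_iff_lt
  have hneg : ∀ j, H.derivative.eval (t j) ≤ 0 ↔ H.derivative.eval (t j) < 0 :=
    fun j => (hsimple j).le_iff_lt
  simp only [hpos, hneg]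
  exact ⟨fun _ => hcount, fun ⟨m, hm⟩ => hcount.trans (by omega)⟩

/-- Interval-wise node counting: let `h` be strictly convex and differentiable on
`(a,b)` with unique minimizer `y`, and let `H` be a polynomial all of whose roots in
`(a,b)` are simple; a root `t` is admissible if `t < y` and `H'(t) ≥ 0`, or `t ≥ y`
and `H'(t) ≤ 0`.  If there are `r` roots, the number of admissible ones is at most
`r/2 + 1` for even `r` and `⌈r/2⌉` for odd `r`. -/
theorem stmt15 (a b : ℝ) (hab : a < b) (h : ℝ → ℝ)
    (hconv : StrictConvexOn ℝ (Ioo a b) h)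
    (hdiff : DifferentiableOn ℝ h (Ioo a b))
    (y : ℝ) (hy : y ∈ Ioo a b) (hymin : ∀ u ∈ Ioo a b, h y ≤ h u)
    (H : Polynomial ℝ) (hH : H ≠ 0)
    (r : ℕ) (t : Fin r → ℝ) (ht : StrictMono t)
    (htI : ∀ j, t j ∈ Ioo a b)
    (hroot : ∀ j, H.eval (t j) = 0)
    (hsimple : ∀ j, H.derivative.eval (t j) ≠ 0)
    (hall : ∀ x ∈ Ioo a b, H.eval x = 0 → ∃ j, x = t j) :
    (Even r →
      (Finset.univ.filter fun j =>
          (t j < y ∧ 0 ≤ H.derivative.eval (t j)) ∨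
          (y ≤ t j ∧ H.derivative.eval (t j) ≤ 0)).card ≤ r / 2 + 1) ∧
    (Odd r →
      (Finset.univ.filter fun j =>
          (t j < y ∧ 0 ≤ H.derivative.eval (t j)) ∨
          (y ≤ t j ∧ H.derivative.eval (t j) ≤ 0)).card ≤ (r + 1) / 2) :=
  stmt15_general a b y H r t ht htI hroot hsimple hall
end

section
/- For integers s ≥ d ≥ 1, the number of distinct values of a + bd over nonnegative integers a, b with a + b ≤ s equals ds − d(d−3)/2, and these values are exactly the exponents appearing in polynomials of the form p(t, t^d) with deg p ≤ s. -/
/-!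
Every `e = a + b * d` with `a + b ≤ s` also has the representation `e = e % d + (e / d) * d`, and
this one is still admissible: trading `d` units of `a` for one unit of `b` lowers `a + b` by
`d - 1 ≥ 0`. Hence `e ↦ (e % d, e / d)` is a bijection from the set onto the pairs with `a < d`
and `a + b ≤ s`, i.e. the triangle of size `s` minus a translate of the triangle of size `s - d`.

The substitution `x ↦ t, y ↦ t ^ d` sends the monomial `x ^ a * y ^ b` to `t ^ (a + b * d)`, so
every exponent of `p(t, t ^ d)` comes from a monomial of `p`, and the monomial itself realises it.
-/

open Polynomial Finset

def triangle (n : ℕ) : Finset (ℕ × ℕ) := (range (n + 1)).biUnion antidiagonal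

@[simp]
theorem mem_triangle {n : ℕ} {p : ℕ × ℕ} : p ∈ triangle n ↔ p.1 + p.2 ≤ n := by
  simp [triangle]

theorem card_triangle (n : ℕ) : #(triangle n) = (n + 2).choose 2 := by
  rw [triangle, card_biUnion fun i _ j _ hij => disjoint_left.2 fun p hi hj => hij <|
      (mem_antidiagonal.1 hi).symm.trans (mem_antidiagonal.1 hj)]
  simp only [Nat.card_antidiagonal]
  rw [Nat.choose_two_right, ← sum_range_id, sum_range_succ' (fun i => i) (n + 1), add_zero]

theorem card_filter_fst_lt_triangle {d s : ℕ} (hs : d ≤ s) :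
    #((triangle s).filter (·.1 < d)) = (s + 2).choose 2 - (s - d + 2).choose 2 := by
  have hshift : (triangle s).filter (fun p => ¬ p.1 < d) =
      (triangle (s - d)).map (addLeftEmbedding (d, 0)) := by
    ext ⟨a, b⟩
    simp only [mem_filter, mem_triangle, mem_map, addLeftEmbedding_apply, Prod.exists,
      Prod.mk_add_mk, Prod.mk.injEq]
    constructor
    · rintro ⟨hab, had⟩
      exact ⟨a - d, b, by omega, by omega, by omega⟩
    · rintro ⟨x, y, hxy, rfl, rfl⟩
      omega
  have := card_filter_add_card_filter_not (s := triangle s) (fun p => p.1 < d)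
  rw [hshift, card_map, card_triangle, card_triangle] at this
  omega

theorem exists_add_mul_eq_iff_mod_add_div_le {d : ℕ} (hd : 0 < d) (s e : ℕ) :
    (∃ a b : ℕ, a + b ≤ s ∧ e = a + b * d) ↔ e % d + e / d ≤ s := by
  constructor
  · rintro ⟨a, b, hab, rfl⟩
    obtain ⟨k, hk⟩ : ∃ k, (a + b * d) / d = b + k :=
      Nat.exists_eq_add_of_le ((Nat.le_div_iff_mul_le hd).2 (Nat.le_add_left _ _))
    have hdiv := Nat.mod_add_div' (a + b * d) d
    rw [hk] at hdiv ⊢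
    nlinarith [Nat.le_mul_of_pos_right k hd]
  · intro h
    exact ⟨e % d, e / d, h, (Nat.mod_add_div' e d).symm⟩

theorem ncard_setOf_mod_add_div_le {d : ℕ} (hd : 0 < d) (s : ℕ) :
    {e : ℕ | e % d + e / d ≤ s}.ncard = #((triangle s).filter (·.1 < d)) := by
  rw [← Set.ncard_coe_finset]
  refine Set.ncard_congr (fun e _ => (e % d, e / d)) (fun e he => ?_) (fun e e' _ _ h => ?_)
    (fun p hp => ?_)
  · simpa [Nat.mod_lt e hd] using he
  · simp only [Prod.mk.injEq] at h
    rw [← Nat.mod_add_div e d, ← Nat.mod_add_div e' d, h.1, h.2]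
  · obtain ⟨a, b⟩ := p
    simp only [coe_filter, mem_triangle, Set.mem_ofPred_eq] at hp
    refine ⟨a + b * d, ?_, ?_⟩ <;>
      simp [Nat.add_mul_mod_self_right, Nat.mod_eq_of_lt hp.2, Nat.add_mul_div_right _ _ hd,
        Nat.div_eq_of_lt hp.2, hp.1]

theorem aeval_X_pow_monomial {σ R : Type*} [CommSemiring R] (w : σ → ℕ) (m : σ →₀ ℕ)
    (c : R) :
    MvPolynomial.aeval (fun i => (X : R[X]) ^ w i) (MvPolynomial.monomial m c) =
      C c * X ^ Finsupp.weight w m := by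
  simp only [MvPolynomial.aeval_monomial, Finsupp.prod, ← pow_mul, prod_pow_eq_pow_sum,
    Finsupp.weight_apply, Finsupp.sum, smul_eq_mul, mul_comm]
  rfl

theorem exists_weight_eq_of_mem_support_aeval_X_pow {σ R : Type*} [CommSemiring R] (w : σ → ℕ)
    {p : MvPolynomial σ R} {n : ℕ}
    (hn : n ∈ (MvPolynomial.aeval (fun i => (X : R[X]) ^ w i) p).support) :
    ∃ m ∈ p.support, Finsupp.weight w m = n := by
  rw [p.as_sum, map_sum, mem_support_iff, finsetSum_coeff] at hn
  obtain ⟨m, hm, hcoeff⟩ := exists_ne_zero_of_sum_ne_zero hn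
  rw [aeval_X_pow_monomial, coeff_C_mul_X_pow] at hcoeff
  exact ⟨m, hm, (ite_ne_right_iff.1 hcoeff).1.symm⟩

/-- For `s ≥ d ≥ 1`, the set `E = {a + b·d : a + b ≤ s}` has exactly
`binom(s+2,2) − binom(s−d+2,2)` (`= ds − d(d−3)/2`) elements, and its elements are
exactly the exponents occurring in polynomials of the form `p(t, t^d)` with
`deg p ≤ s`. -/
theorem stmt18 (d s : ℕ) (hd : 1 ≤ d) (hs : d ≤ s) :
    {e : ℕ | ∃ a b : ℕ, a + b ≤ s ∧ e = a + b * d}.ncard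
        = Nat.choose (s + 2) 2 - Nat.choose (s - d + 2) 2 ∧
    ∀ e : ℕ, (∃ a b : ℕ, a + b ≤ s ∧ e = a + b * d) ↔
      ∃ p : MvPolynomial (Fin 2) ℝ, p.totalDegree ≤ s ∧
        e ∈ (MvPolynomial.aeval ![(X : Polynomial ℝ), X ^ d] p).support := by
  refine ⟨?_, fun e => ?_⟩
  · simp_rw [exists_add_mul_eq_iff_mod_add_div_le hd]
    rw [ncard_setOf_mod_add_div_le hd, card_filter_fst_lt_triangle hs]
  have hsubst : ![(X : ℝ[X]), X ^ d] = fun i => X ^ ![1, d] i := by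
    ext i : 1
    fin_cases i <;> simp
  have hweight (m : Fin 2 →₀ ℕ) : Finsupp.weight ![1, d] m = m 0 + m 1 * d := by
    simp [Finsupp.weight_eq_sum]
  rw [hsubst]
  constructor
  · rintro ⟨a, b, hab, rfl⟩
    refine ⟨MvPolynomial.monomial (Finsupp.single 0 a + Finsupp.single 1 b) 1, ?_, ?_⟩
    · simpa [MvPolynomial.totalDegree_monomial, Finsupp.sum_add_index'] using hab
    · simp [aeval_X_pow_monomial, hweight]
  · rintro ⟨p, hp, he⟩
    obtain ⟨m, hm, rfl⟩ := exists_weight_eq_of_mem_support_aeval_X_pow _ he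
    refine ⟨m 0, m 1, ?_, hweight m⟩
    simpa [Finsupp.sum_fintype] using (MvPolynomial.le_totalDegree hm).trans hp
end

section
/- Let μ be a finite nonnegative Borel measure on ℝ^n supported on the image of a polynomial curve φ: ℝ → ℝ^n with coordinates of degree ≤ d, n ≥ 3, such that the substitution map Ψ_s: ℝ[x_1,…,x_n]_{≤s} → ℝ[t]_{≤sd} is surjective, s ≥ d, and the pullback measure ν (with φ_*ν = μ) is nondegenerate at degree ⌊sd/2⌋. Then every quadrature rule of strength s for μ supported on the curve has at least ⌈(sd+1)/2⌉ nodes. -/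
open MeasureTheory Polynomial

lemma eval_aeval_comp {n : ℕ} (φ : Fin n → Polynomial ℝ) (t : ℝ)
    (p : MvPolynomial (Fin n) ℝ) :
    MvPolynomial.eval (fun j => (φ j).eval t) p = (MvPolynomial.aeval φ p).eval t := by
  induction p using MvPolynomial.induction_on with
  | C a => simp
  | add p q hp hq => simp [hp, hq]
  | mul_X p i hp => simp [hp]

/-- Lower bound for quadrature on rational curves: if `μ = φ_* ν` for a polynomial
curve `φ : ℝ → ℝⁿ` (`n ≥ 3`) with coordinate degrees `≤ d`, the substitution map
`Ψ_s` is surjective, `s ≥ d`, and `ν` is nondegenerate at degree `⌊sd/2⌋`, then any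
quadrature rule of strength `s` for `μ` with nodes on the curve has at least
`⌈(sd+1)/2⌉` nodes. -/
theorem stmt19 (n d s : ℕ) (hn : 3 ≤ n) (hds : d ≤ s)
    (φ : Fin n → Polynomial ℝ) (hdeg : ∀ i, (φ i).natDegree ≤ d)
    (ν : Measure ℝ) [IsFiniteMeasure ν]
    (μ : Measure (Fin n → ℝ))
    (hμν : μ = Measure.map (fun t i => (φ i).eval t) ν)
    (hsurj : ∀ g : Polynomial ℝ, g.natDegree ≤ s * d →
      ∃ p : MvPolynomial (Fin n) ℝ, p.totalDegree ≤ s ∧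
        MvPolynomial.aeval φ p = g)
    (hmom : ∀ j ≤ s * d, Integrable (fun t : ℝ => t ^ j) ν)
    (hnondeg : ∀ g : Polynomial ℝ, g ≠ 0 → g.natDegree ≤ s * d / 2 →
      0 < ∫ t, (g.eval t) ^ 2 ∂ν)
    (k : ℕ) (x : Fin k → (Fin n → ℝ))
    (hx : ∀ i, ∃ t : ℝ, (fun j => (φ j).eval t) = x i)
    (ω : Fin k → ℝ) (hω : ∀ i, 0 < ω i)
    (hquad : ∀ p : MvPolynomial (Fin n) ℝ, p.totalDegree ≤ s →
      ∑ i, ω i * MvPolynomial.eval (x i) p = ∫ y, MvPolynomial.eval y p ∂μ) :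
    (s * d + 2) / 2 ≤ k := by
  by_contra hk
  push_neg at hk
  have h2k : 2 * k ≤ s * d := by
    have h1 : k + 1 ≤ (s * d + 2) / 2 := hk
    have := (Nat.le_div_iff_mul_le (by norm_num : 0 < 2)).mp h1
    omega
  have hkd2 : k ≤ s * d / 2 := (Nat.le_div_iff_mul_le (by norm_num)).mpr (by omega)
  -- preimages
  choose t ht using hx
  -- the polynomial vanishing at all t i
  set g : Polynomial ℝ := ∏ i, (X - C (t i)) with hg
  have hgmonic : g.Monic := monic_prod_of_monic _ _ (fun i _ => monic_X_sub_C (t i))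
  have hgne : g ≠ 0 := hgmonic.ne_zero
  have hgdeg : g.natDegree = k := by
    simp [hg, natDegree_prod_of_monic _ _ (fun i _ => monic_X_sub_C (t i))]
  have hg2deg : (g ^ 2).natDegree ≤ s * d := by
    rw [natDegree_pow, hgdeg]; omega
  obtain ⟨p, hpdeg, hpval⟩ := hsurj (g ^ 2) hg2deg
  -- quadrature identity applied to p
  have key := hquad p hpdeg
  -- evaluate nodes
  have hnode : ∀ i, MvPolynomial.eval (x i) p = (g.eval (t i)) ^ 2 := by
    intro i
    rw [← ht i, eval_aeval_comp, hpval]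
    simp
  have hroot : ∀ i : Fin k, g.eval (t i) = 0 := by
    intro i
    rw [hg, eval_prod]
    exact Finset.prod_eq_zero (Finset.mem_univ i) (by simp)
  have hlhs : ∑ i, ω i * MvPolynomial.eval (x i) p = 0 := by
    apply Finset.sum_eq_zero
    intro i _
    rw [hnode, hroot]; ring
  -- integral side
  have hmeas : Measurable (fun t : ℝ => fun i => (φ i).eval t) := by
    apply measurable_pi_lambda
    intro i
    exact (Polynomial.continuous (φ i)).measurable
  have hint : (∫ y, MvPolynomial.eval y p ∂μ) = ∫ u, (g.eval u) ^ 2 ∂ν := by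
    rw [hμν, integral_map hmeas.aemeasurable
      (MvPolynomial.continuous_eval p).aestronglyMeasurable]
    congr 1
    funext u
    rw [eval_aeval_comp, hpval]
    simp
  have hpos := hnondeg g hgne (hgdeg ▸ hkd2)
  rw [hlhs, hint] at key
  linarith
end
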